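/- arXiv:1101.2679 — 2 statements merged into one kernel-verified Lean document; each statement's English description precedes it below -/
import Mathlib

section
/- For any probability measure ν on (a,b), the probability measures π_{ν,μ,σ} on (a,b) defined by π_{ν,μ,σ}(A) = (∫_A dy ∫_a^b g^{(a,b)}_{σ,μ}(x,y) ν(dx)) / (∫_a^b dy ∫_a^b g^{(a,b)}_{σ,μ}(x,y) ν(dx)) converge weakly, as μ → ∞, to the probability measure with density y ↦ ν((a,y]) / ∫_a^b ν((a,z]) dz with respect to Lebesgue measure on (a,b). In particular, for ν = δ_{x₀} with x₀ = (a+b)/2, the limit is the uniform distribution on [x₀, b), i.e. the measure A ↦ |A ∩ [x₀,b)|/(b−x₀). -/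
/-!
Multiplying the Green function by `c = 2μ/σ²` does not change the ratio, and `c · g_{σ,μ}(x, y)`
is bounded by `1` on `(a,b)²` and tends to `𝟙{x < y}` as `c → ∞`. Dominated convergence in `x`
against `ν`, at every `y` that is not an atom of `ν` (hence for almost every `y`), shows that the
inner integral tends to `ν((a,y])`; a second application in `y` gives the limits of numerator and
denominator. The limiting denominator `∫_a^b ν((a,z]) dz` is positive because `ν` charges `(a,b)`.
For `ν = δ_{x₀}` one has `ν((a,y]) = 𝟙{x₀ ≤ y}`.
-/

open MeasureTheory Set Filter

/-- The Green function of `L^{σ,μ} = (σ²/2) d²/dx² + μ d/dx` on `(a,b)` with Dirichlet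
boundary conditions (the value on the diagonal `x = y` is irrelevant). -/
noncomputable def greenFn (a b σ μ x y : ℝ) : ℝ :=
  if x < y then
    σ ^ 2 / (2 * μ) *
      ((1 - Real.exp (-2 * μ / σ ^ 2 * (x - a))) / (Real.exp (-2 * μ / σ ^ 2 * (b - a)) - 1)) *
      (Real.exp (-2 * μ / σ ^ 2 * (b - y)) - 1)
  else
    σ ^ 2 / (2 * μ) *
      ((Real.exp (-2 * μ / σ ^ 2 * (b - x)) - 1) / (Real.exp (-2 * μ / σ ^ 2 * (b - a)) - 1)) *
      Real.exp (-2 * μ / σ ^ 2 * (x - a)) * (Real.exp (-2 * μ / σ ^ 2 * (b - y)) - 1)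

open Topology

/-- `c · g_{σ,μ}` with `c = 2μ/σ²`: it depends on `σ` and `μ` only through `c`. -/
noncomputable def normalizedGreen (a b c x y : ℝ) : ℝ :=
  if x < y then
    (1 - Real.exp (-c * (x - a))) * (1 - Real.exp (-c * (b - y))) /
      (1 - Real.exp (-c * (b - a)))
  else
    (Real.exp (-c * (b - a)) - Real.exp (-c * (x - a))) * (1 - Real.exp (-c * (b - y))) /
      (1 - Real.exp (-c * (b - a)))

lemma mul_greenFn_eq_normalizedGreen {a b σ μ : ℝ} (hab : a ≠ b) (hσ : σ ≠ 0) (hμ : μ ≠ 0)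
    (x y : ℝ) : 2 * μ / σ ^ 2 * greenFn a b σ μ x y = normalizedGreen a b (2 * μ / σ ^ 2) x y := by
  set c := 2 * μ / σ ^ 2 with hc_def
  have hc : c ≠ 0 := by positivity
  have hneg : -2 * μ / σ ^ 2 = -c := by rw [hc_def]; ring
  have hinv : σ ^ 2 / (2 * μ) = c⁻¹ := by rw [hc_def, inv_div]
  have hbx : Real.exp (-c * (b - x)) = Real.exp (-c * (b - a)) / Real.exp (-c * (x - a)) := by
    rw [← Real.exp_sub]
    congr 1
    ring
  have hR : 1 - Real.exp (-c * (b - a)) ≠ 0 := by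
    rw [sub_ne_zero, ne_comm, Ne, Real.exp_eq_one_iff]
    exact mul_ne_zero (neg_ne_zero.mpr hc) (sub_ne_zero.mpr hab.symm)
  have hP : Real.exp (-c * (x - a)) ≠ 0 := Real.exp_ne_zero _
  unfold greenFn normalizedGreen
  rw [hneg, hinv, hbx]
  generalize Real.exp (-c * (x - a)) = P at hP ⊢
  generalize Real.exp (-c * (b - a)) = R at hR ⊢
  have hR' : R - 1 ≠ 0 := fun h => hR (by linarith)
  split_ifs <;> field_simp <;> ring

lemma abs_normalizedGreen_le_one {a b c x y : ℝ} (hc : 0 ≤ c) (hx : x ∈ Icc a b)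
    (hy : y ∈ Icc a b) : |normalizedGreen a b c x y| ≤ 1 := by
  obtain ⟨hax, hxb⟩ := hx
  obtain ⟨hay, hyb⟩ := hy
  have hP : Real.exp (-c * (x - a)) ≤ 1 := Real.exp_le_one_iff.mpr (by nlinarith)
  have hQ : Real.exp (-c * (b - y)) ≤ 1 := Real.exp_le_one_iff.mpr (by nlinarith)
  have hRP : Real.exp (-c * (b - a)) ≤ Real.exp (-c * (x - a)) := Real.exp_le_exp.mpr (by nlinarith)
  have hR0 := Real.exp_nonneg (-c * (b - a))
  have hQ0 := Real.exp_nonneg (-c * (b - y))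
  have hR : 0 ≤ 1 - Real.exp (-c * (b - a)) := by linarith
  have hdiv : ∀ u, |u| ≤ 1 - Real.exp (-c * (b - a)) →
      |u / (1 - Real.exp (-c * (b - a)))| ≤ 1 := fun u hu => by
    rw [abs_div, abs_of_nonneg hR]
    exact div_le_one_of_le₀ hu hR
  unfold normalizedGreen
  split_ifs <;> refine hdiv _ (abs_le.mpr ⟨?_, ?_⟩) <;> nlinarith

lemma tendsto_normalizedGreen {a b x y : ℝ} (hx : x ∈ Ioo a b) (hy : y ∈ Ioo a b) :
    Tendsto (fun c => normalizedGreen a b c x y) atTop (𝓝 (if x < y then 1 else 0)) := by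
  have hexp : ∀ t > 0, Tendsto (fun c => Real.exp (-c * t)) atTop (𝓝 0) := fun t ht => by
    simpa only [neg_mul, Function.comp_def, id] using
      Real.tendsto_exp_neg_atTop_nhds_zero.comp (tendsto_id.atTop_mul_const ht)
  have hP := hexp (x - a) (by linarith [hx.1])
  have hQ := hexp (b - y) (by linarith [hy.2])
  have hR := hexp (b - a) (by linarith [hx.1, hx.2])
  have h1 : Tendsto (fun _ : ℝ => (1 : ℝ)) atTop (𝓝 1) := tendsto_const_nhds
  by_cases h : x < y
  · simpa [normalizedGreen, h, Pi.div_def] using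
      (((h1.sub hP).mul (h1.sub hQ)).div (h1.sub hR) (by norm_num))
  · simpa [normalizedGreen, h, Pi.div_def] using
      (((hR.sub hP).mul (h1.sub hQ)).div (h1.sub hR) (by norm_num))

lemma measurable_uncurry_normalizedGreen (a b c : ℝ) :
    Measurable (Function.uncurry (normalizedGreen a b c)) := by
  change Measurable fun p : ℝ × ℝ => normalizedGreen a b c p.1 p.2
  unfold normalizedGreen
  exact Measurable.ite (measurableSet_lt measurable_fst measurable_snd) (by fun_prop) (by fun_prop)

lemma ae_measure_singleton_eq_zero {α : Type*} [MeasurableSpace α] [MeasurableSingletonClass α]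
    (μ ν : Measure α) [NullSingletonClass μ] [SFinite ν] : ∀ᵐ y ∂μ, ν {y} = 0 := by
  have hcount : {y : α | 0 < ν {y}}.Countable := by
    simpa only [id, ofPred_eq_eq_singleton] using Measure.countable_meas_level_set_pos measurable_id
  simpa only [ae_iff, pos_iff_ne_zero] using hcount.measure_zero μ

lemma tendsto_integral_normalizedGreen {a b y : ℝ} {ν : Measure ℝ} [IsFiniteMeasure ν]
    (hν : ∀ᵐ x ∂ν, x ∈ Ioo a b) (hy : y ∈ Ioo a b) (hνy : ν {y} = 0) :
    Tendsto (fun c => ∫ x, normalizedGreen a b c x y ∂ν) atTop (𝓝 (ν (Ioc a y)).toReal) := by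
  have hxy : ∀ᵐ x ∂ν, x ∉ ({y} : Set ℝ) := measure_eq_zero_iff_ae_notMem.mp hνy
  rw [← Measure.real, ← integral_indicator_one measurableSet_Ioc]
  have hmeas c : Measurable fun x => normalizedGreen a b c x y :=
    (measurable_uncurry_normalizedGreen a b c).comp measurable_prodMk_right
  refine tendsto_integral_filter_of_dominated_convergence (fun _ => 1)
    (Eventually.of_forall fun c => (hmeas c).aestronglyMeasurable) ?_ (integrable_const 1) ?_
  · filter_upwards [eventually_ge_atTop 0] with c hc
    filter_upwards [hν] with x hx
    exact abs_normalizedGreen_le_one hc (Ioo_subset_Icc_self hx) (Ioo_subset_Icc_self hy)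
  · filter_upwards [hν, hxy] with x hx hxy
    convert tendsto_normalizedGreen hx hy using 2
    rw [mem_singleton_iff] at hxy
    by_cases h : x < y
    · simp [h, hx.1, h.le]
    · simp [h, hx.1, lt_of_le_of_ne (not_lt.mp h) (Ne.symm hxy)]

lemma tendsto_setIntegral_mul_integral_normalizedGreen {a b : ℝ} {ν : Measure ℝ}
    [IsFiniteMeasure ν] (hν : ∀ᵐ x ∂ν, x ∈ Ioo a b) {f : ℝ → ℝ}
    (hf : AEStronglyMeasurable f (volume.restrict (Ioo a b))) {C : ℝ} (hC : ∀ y, |f y| ≤ C) :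
    Tendsto (fun c => ∫ y in Ioo a b, f y * ∫ x, normalizedGreen a b c x y ∂ν) atTop
      (𝓝 (∫ y in Ioo a b, f y * (ν (Ioc a y)).toReal)) := by
  have hmeas c : StronglyMeasurable fun y => ∫ x, normalizedGreen a b c x y ∂ν :=
    (measurable_uncurry_normalizedGreen a b c).stronglyMeasurable.integral_prod_left
  refine tendsto_integral_filter_of_dominated_convergence (fun _ => C * ν.real univ)
    (Eventually.of_forall fun c => hf.mul (hmeas c).aestronglyMeasurable)
    ?_ (integrableOn_const measure_Ioo_lt_top.ne) ?_
  · filter_upwards [eventually_ge_atTop 0] with c hc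
    filter_upwards [ae_restrict_mem measurableSet_Ioo] with y hy
    rw [norm_mul]
    refine mul_le_mul (hC y) ((norm_integral_le_of_norm_le_const ?_).trans_eq (one_mul _))
      (norm_nonneg _) ((abs_nonneg _).trans (hC y))
    filter_upwards [hν] with x hx
    exact abs_normalizedGreen_le_one hc (Ioo_subset_Icc_self hx) (Ioo_subset_Icc_self hy)
  · filter_upwards [ae_restrict_mem measurableSet_Ioo,
      ae_restrict_of_ae (ae_measure_singleton_eq_zero volume ν)] with y hy hνy
    exact (tendsto_integral_normalizedGreen hν hy hνy).const_mul (f y)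

lemma setIntegral_measure_Ioc_pos {a b : ℝ} {ν : Measure ℝ} [IsFiniteMeasure ν]
    (hν : ν (Ioo a b) ≠ 0) : 0 < ∫ z in Ioo a b, (ν (Ioc a z)).toReal := by
  obtain ⟨q, hq, hνq⟩ : ∃ q ∈ Ioo a b, ν (Ioc a q) ≠ 0 := by
    by_contra! h
    refine hν (measure_mono_null (fun x hx => ?_)
      (measure_iUnion_null fun q : {q : ℚ // (q : ℝ) ∈ Ioo a b} => h q q.2))
    obtain ⟨q, hxq, hqb⟩ := exists_rat_btwn hx.2
    exact mem_iUnion.mpr ⟨⟨q, hx.1.trans hxq, hqb⟩, hx.1, hxq.le⟩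
  have hmono : Monotone fun z => (ν (Ioc a z)).toReal := fun z w hzw =>
    ENNReal.toReal_mono (measure_ne_top ν _) (measure_mono (Ioc_subset_Ioc_right hzw))
  have hint : IntegrableOn (fun z => (ν (Ioc a z)).toReal) (Ioo a b) :=
    (hmono.locallyIntegrable.integrableOn_isCompact isCompact_Icc).mono_set Ioo_subset_Icc_self
  have hsub : Ioo q b ⊆ Ioo a b := Ioo_subset_Ioo_left hq.1.le
  calc 0 < (ν (Ioc a q)).toReal * (b - q) :=
        mul_pos (ENNReal.toReal_pos hνq (measure_ne_top ν _)) (sub_pos.mpr hq.2)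
    _ = (ν (Ioc a q)).toReal * volume.real (Ioo q b) := by
        rw [Real.volume_real_Ioo_of_le hq.2.le]
    _ ≤ ∫ z in Ioo q b, (ν (Ioc a z)).toReal :=
        setIntegral_ge_of_const_le_real measurableSet_Ioo measure_Ioo_lt_top.ne
          (fun z hz => hmono hz.1.le) (hint.mono_set hsub)
    _ ≤ ∫ z in Ioo a b, (ν (Ioc a z)).toReal :=
        setIntegral_mono_set hint (Eventually.of_forall fun _ => ENNReal.toReal_nonneg)
          hsub.eventuallyLE

lemma integral_normalizedGreen_eq {a b σ μ : ℝ} (hab : a ≠ b) (hσ : σ ≠ 0) (hμ : μ ≠ 0)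
    (ν : Measure ℝ) (y : ℝ) :
    ∫ x, normalizedGreen a b (2 * μ / σ ^ 2) x y ∂ν =
      2 * μ / σ ^ 2 * ∫ x, greenFn a b σ μ x y ∂ν := by
  simp_rw [← mul_greenFn_eq_normalizedGreen hab hσ hμ, integral_const_mul]

lemma setIntegral_mul_dirac_Ioc {a b x₀ : ℝ} (hx₀ : a < x₀) (g : ℝ → ℝ) :
    ∫ y in Ioo a b, g y * (Measure.dirac x₀ (Ioc a y)).toReal = ∫ y in Ico x₀ b, g y := by
  have hind : ∀ y, g y * (Measure.dirac x₀ (Ioc a y)).toReal = (Ici x₀).indicator g y := by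
    intro y
    by_cases hy : x₀ ≤ y <;> simp [Measure.dirac_apply' _ measurableSet_Ioc, indicator, hx₀, hy]
  have hset : Ioo a b ∩ Ici x₀ = Ico x₀ b := by
    ext y
    simp only [mem_inter_iff, mem_Ioo, mem_Ici, mem_Ico]
    constructor
    · rintro ⟨⟨-, hyb⟩, hy⟩
      exact ⟨hy, hyb⟩
    · rintro ⟨hy, hyb⟩
      exact ⟨⟨hx₀.trans_le hy, hyb⟩, hy⟩
  simp_rw [hind]
  rw [setIntegral_indicator measurableSet_Ici, hset]

lemma setIntegral_dirac_Ioc {a b x₀ : ℝ} (hx₀ : a < x₀) (hx₀b : x₀ ≤ b) :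
    ∫ y in Ioo a b, (Measure.dirac x₀ (Ioc a y)).toReal = b - x₀ := by
  simpa [Real.volume_real_Ico_of_le hx₀b] using setIntegral_mul_dirac_Ioc (b := b) hx₀ fun _ => 1

lemma tendsto_greenFn_ratio {a b σ : ℝ} (hab : a ≠ b) (hσ : σ ≠ 0) {ν : Measure ℝ}
    [IsFiniteMeasure ν] (hν : ∀ᵐ x ∂ν, x ∈ Ioo a b) (hνab : ν (Ioo a b) ≠ 0) {f : ℝ → ℝ}
    (hf : AEStronglyMeasurable f (volume.restrict (Ioo a b))) {C : ℝ} (hC : ∀ y, |f y| ≤ C) :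
    Tendsto (fun μ : ℝ =>
        (∫ y in Ioo a b, f y * ∫ x, greenFn a b σ μ x y ∂ν) /
          (∫ y in Ioo a b, ∫ x, greenFn a b σ μ x y ∂ν))
      atTop
      (𝓝 ((∫ y in Ioo a b, f y * (ν (Ioc a y)).toReal) /
        (∫ z in Ioo a b, (ν (Ioc a z)).toReal))) := by
  have hc : Tendsto (fun μ : ℝ => 2 * μ / σ ^ 2) atTop atTop := by
    simpa only [id, mul_div_right_comm] using
      tendsto_id.const_mul_atTop (by positivity : (0 : ℝ) < 2 / σ ^ 2)
  have hnum := (tendsto_setIntegral_mul_integral_normalizedGreen hν hf hC).comp hc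
  have hden : Tendsto
      (fun μ : ℝ => ∫ y in Ioo a b, ∫ x, normalizedGreen a b (2 * μ / σ ^ 2) x y ∂ν) atTop (𝓝 (∫ z in Ioo a b, (ν (Ioc a z)).toReal)) := by
    simpa only [one_mul, Function.comp_def] using (tendsto_setIntegral_mul_integral_normalizedGreen
      hν (f := fun _ => 1) aestronglyMeasurable_const (C := 1) (by simp)).comp hc
  refine (hnum.div hden (setIntegral_measure_Ioc_pos hνab).ne').congr' ?_
  filter_upwards [eventually_gt_atTop 0] with μ hμ
  simp only [Pi.div_apply, Function.comp_apply, integral_normalizedGreen_eq hab hσ hμ.ne',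
    mul_left_comm (f _), integral_const_mul]
  exact mul_div_mul_left _ _ (by positivity)

/-- As `μ → ∞`, the probability measures
`π_{ν,μ,σ}(A) = (∫_A ∫ g_{σ,μ}(x,y) ν(dx) dy) / (∫_a^b ∫ g_{σ,μ}(x,y) ν(dx) dy)`
converge weakly to the measure with Lebesgue density `y ↦ ν((a,y]) / ∫_a^b ν((a,z]) dz`
on `(a,b)`. In particular, for `ν = δ_{x₀}` with `x₀ = (a+b)/2`, the limit is the
uniform distribution on `[x₀, b)`. -/
theorem invariant_measure_large_drift_limit (a b σ : ℝ) (hab : a < b) (hσ : 0 < σ)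
    (ν : Measure ℝ) (hν : IsProbabilityMeasure ν) (hνsupp : ν (Set.Ioo a b)ᶜ = 0) :
    (∀ f : ℝ → ℝ, Continuous f → (∃ C : ℝ, ∀ y, |f y| ≤ C) →
      Tendsto (fun μ : ℝ =>
          (∫ y in Set.Ioo a b, f y * ∫ x, greenFn a b σ μ x y ∂ν) /
            (∫ y in Set.Ioo a b, ∫ x, greenFn a b σ μ x y ∂ν))
        atTop
        (nhds ((∫ y in Set.Ioo a b, f y * (ν (Set.Ioc a y)).toReal) /
          (∫ z in Set.Ioo a b, (ν (Set.Ioc a z)).toReal)))) ∧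
    (ν = Measure.dirac ((a + b) / 2) →
      ∀ f : ℝ → ℝ, Continuous f → (∃ C : ℝ, ∀ y, |f y| ≤ C) →
        Tendsto (fun μ : ℝ =>
            (∫ y in Set.Ioo a b, f y * greenFn a b σ μ ((a + b) / 2) y) /
              (∫ y in Set.Ioo a b, greenFn a b σ μ ((a + b) / 2) y))
          atTop
          (nhds ((b - (a + b) / 2)⁻¹ * ∫ y in Set.Ico ((a + b) / 2) b, f y))) := by
  have hνae : ∀ᵐ x ∂ν, x ∈ Ioo a b := mem_ae_iff.mpr hνsupp
  have hνab : ν (Ioo a b) ≠ 0 := by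
    rw [(prob_compl_eq_zero_iff measurableSet_Ioo).mp hνsupp]
    exact one_ne_zero
  refine ⟨fun f hf ⟨_, hC⟩ =>
    tendsto_greenFn_ratio hab.ne hσ.ne' hνae hνab hf.aestronglyMeasurable hC, ?_⟩
  rintro rfl f hf ⟨_, hC⟩
  have hx₀ : a < (a + b) / 2 := by linarith
  simpa only [integral_dirac, setIntegral_mul_dirac_Ioc hx₀,
    setIntegral_dirac_Ioc (b := b) hx₀ (by linarith), inv_mul_eq_div] using
    tendsto_greenFn_ratio hab.ne hσ.ne' hνae hνab hf.aestronglyMeasurable hC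
end

section
/- Let a < b, x₀ = (a+b)/2, σ > 0 and μ > 0. For x ∈ (a, x₀) let τ^x = inf{t > 0 : x + μt + σB_t ∉ (a, x₀)} be the first exit time of the Brownian motion with variance parameter σ and drift μ started at x from the interval (a, x₀). Then for all t > 0, sup_{x∈(a,x₀)} P(τ^x > t) ≤ e^{(b−a)μ/(2σ²)} · e^{−μ²t/(2σ²)}. -/
open MeasureTheory ProbabilityTheory Set Filter

open scoped Classical in
/-- A standard one-dimensional Brownian motion started at `0`: continuous paths,
`B 0 = 0`, Gaussian increments `B t - B s ~ N(0, t-s)` and independent increments. -/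
structure IsStandardBM {Ω : Type} [MeasurableSpace Ω] (P : Measure Ω) (B : ℝ → Ω → ℝ) : Prop where
  isProb : IsProbabilityMeasure P
  start : ∀ ω, B 0 ω = 0
  meas : ∀ t, Measurable (B t)
  cont : ∀ ω, Continuous fun t => B t ω
  gauss : ∀ s t : ℝ, 0 ≤ s → s ≤ t →
    P.map (fun ω => B t ω - B s ω) = gaussianReal 0 (Real.toNNReal (t - s))
  indep : ∀ (n : ℕ) (τ : ℕ → ℝ), Monotone τ → 0 ≤ τ 0 →
    iIndepFun (m := fun _ : Fin n => (inferInstance : MeasurableSpace ℝ))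
      (fun i : Fin n => fun ω => B (τ (i.1 + 1)) ω - B (τ i.1) ω) P

/-- First exit time after 0 of the drifted Brownian motion `x + σ B_t + μ t` from `(c,d)`. -/
noncomputable def exitTime {Ω : Type} (c d σ μ x : ℝ) (B : ℝ → Ω → ℝ) (ω : Ω) : ℝ :=
  sInf {t : ℝ | 0 < t ∧ x + σ * B t ω + μ * t ∉ Set.Ioo c d}

/-! At time `t`, staying in `(a, x₀)` forces `x + σ B_t + μ t < x₀` with `x > a`, hence
`B_t ≤ C := ((b - a)/2 - μ t)/σ`. The Chernoff bound for the Gaussian `B_t ~ N(0, t)` with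
`s = μ/σ` gives `P(B_t ≤ C) ≤ exp(s C + t s²/2)`, and this exponent is exactly
`(b - a) μ/(2σ²) - μ² t/(2σ²)`. -/

lemma measureReal_le_le_exp_of_map_eq_gaussianReal {Ω : Type} [MeasurableSpace Ω]
    {P : Measure Ω} [IsProbabilityMeasure P] {X : Ω → ℝ} {m : ℝ} {v : NNReal}
    (hX : P.map X = gaussianReal m v) (C : ℝ) {s : ℝ} (hs : 0 ≤ s) :
    P.real {ω | X ω ≤ C} ≤ Real.exp (s * (C - m) + v * s ^ 2 / 2) := by
  have h_int : Integrable (fun ω => Real.exp (-s * X ω)) P := by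
    rw [← mgf_pos_iff, mgf_gaussianReal hX]
    exact Real.exp_pos _
  calc P.real {ω | X ω ≤ C} ≤ Real.exp (- -s * C) * mgf X P (-s) :=
        measure_le_le_exp_mul_mgf C (neg_nonpos.mpr hs) h_int
    _ = Real.exp (s * (C - m) + v * s ^ 2 / 2) := by
        rw [mgf_gaussianReal hX, ← Real.exp_add]
        ring_nf

lemma IsStandardBM.map_eq_gaussianReal {Ω : Type} [MeasurableSpace Ω] {P : Measure Ω}
    {B : ℝ → Ω → ℝ} (hB : IsStandardBM P B) {t : ℝ} (ht : 0 ≤ t) :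
    P.map (B t) = gaussianReal 0 t.toNNReal := by
  simpa [hB.start] using hB.gauss 0 t le_rfl ht

lemma mem_Ioo_of_lt_exitTime {Ω : Type} {c d σ μ x t : ℝ} {B : ℝ → Ω → ℝ} {ω : Ω}
    (ht : 0 < t) (hτ : t < exitTime c d σ μ x B ω) :
    x + σ * B t ω + μ * t ∈ Set.Ioo c d := by
  by_contra h
  have h_exit : exitTime c d σ μ x B ω ≤ t := csInf_le ⟨0, fun s hs => hs.1.le⟩ ⟨ht, h⟩
  exact h_exit.not_gt hτ

theorem exit_time_half_interval_bound_general {Ω : Type} [MeasurableSpace Ω] (P : Measure Ω)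
    (B : ℝ → Ω → ℝ) (hB : IsStandardBM P B) (a b σ μ : ℝ)
    (hσ : 0 < σ) (hμ : 0 < μ) :
    ∀ t : ℝ, 0 < t →
      (⨆ x : Set.Ioo a ((a + b) / 2),
          (P {ω | t < exitTime a ((a + b) / 2) σ μ (x : ℝ) B ω}).toReal) ≤
        Real.exp ((b - a) * μ / (2 * σ ^ 2)) * Real.exp (-(μ ^ 2 * t) / (2 * σ ^ 2)) := by
  intro t ht
  have := hB.isProb
  refine Real.iSup_le (fun ⟨x, hxa, _⟩ => ?_) (by positivity)
  set C := ((b - a) / 2 - μ * t) / σ with hC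
  have h_event : {ω | t < exitTime a ((a + b) / 2) σ μ x B ω} ⊆ {ω | B t ω ≤ C} := by
    intro ω hω
    have h_stay := (mem_Ioo_of_lt_exitTime ht hω).2
    change B t ω ≤ C
    rw [hC, le_div_iff₀ hσ]
    linarith
  calc P.real {ω | t < exitTime a ((a + b) / 2) σ μ x B ω}
      ≤ P.real {ω | B t ω ≤ C} := measureReal_mono h_event
    _ ≤ Real.exp (μ / σ * (C - 0) + t.toNNReal * (μ / σ) ^ 2 / 2) :=
        measureReal_le_le_exp_of_map_eq_gaussianReal (hB.map_eq_gaussianReal ht.le) C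
          (div_pos hμ hσ).le
    _ = Real.exp ((b - a) * μ / (2 * σ ^ 2)) * Real.exp (-(μ ^ 2 * t) / (2 * σ ^ 2)) := by
        rw [hC, Real.coe_toNNReal t ht.le, ← Real.exp_add]
        congr 1
        field_simp
        ring

/-- For the exit time `τ^x` of the drifted Brownian motion
`x + μt + σB_t` from `(a, x₀)` with `x₀ = (a+b)/2`:
`sup_{x∈(a,x₀)} P(τ^x > t) ≤ e^{(b-a)μ/(2σ²)} e^{-μ²t/(2σ²)}` for all `t > 0`. -/
theorem exit_time_half_interval_bound {Ω : Type} [MeasurableSpace Ω] (P : Measure Ω)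
    (B : ℝ → Ω → ℝ) (hB : IsStandardBM P B) (a b σ μ : ℝ) (hab : a < b)
    (hσ : 0 < σ) (hμ : 0 < μ) :
    ∀ t : ℝ, 0 < t →
      (⨆ x : Set.Ioo a ((a + b) / 2),
          (P {ω | t < exitTime a ((a + b) / 2) σ μ (x : ℝ) B ω}).toReal) ≤
        Real.exp ((b - a) * μ / (2 * σ ^ 2)) * Real.exp (-(μ ^ 2 * t) / (2 * σ ^ 2)) :=
  exit_time_half_interval_bound_general P B hB a b σ μ hσ hμ
end
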